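/- Let f: R → S be a ring homomorphism and let C be a definable subcategory of Mod-S. Then the restriction C|_R equals the class of all right R-modules M′ such that M′ is a pure submodule of M_R for some M ∈ C (where M_R is M viewed as an R-module via f). -/

import Mathlib

/-!
Core framework for formalizing statements from
"Tensor and direct extension of definable subcategories" (M. Prest).

Conventions:
* A *right* `R`-module is a type with `[AddCommGroup M] [Module Rᵐᵒᵖ M]`;
  the right action of `r : R` on `a : M` is `MulOpposite.op r • a`.
* A *left* `R`-module is a type with `[AddCommGroup L] [Module R L]`.
* An `(R,S)`-bimodule is a type with a left `R`-action and a right `S`-action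
  which commute: `[Module R B] [Module Sᵐᵒᵖ B] [SMulCommClass R Sᵐᵒᵖ B]`.
-/

open MulOpposite

universe u v

namespace MTM

/-- A pp formula for (right) `R`-modules, with free variables indexed by `ι`,
bound variables indexed by `κ` and equations indexed by `ε`:
`∃ ȳ (x̄ A + ȳ B = 0)`. -/
structure PP (R : Type u) [Ring R] (ι : Type) : Type (max u 1) where
  κ : Type
  ε : Type
  [fintκ : Fintype κ]
  [fintε : Fintype ε]
  A : Matrix ι ε R
  B : Matrix κ ε R

attribute [instance] PP.fintκ PP.fintε

namespace PP

variable {R : Type u} [Ring R] {S : Type u} [Ring S] {ι : Type} [Fintype ι]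

/-- The solution set of a pp formula in a right `R`-module. -/
def sol (φ : PP R ι) (M : Type v) [AddCommGroup M] [Module Rᵐᵒᵖ M] : Set (ι → M) :=
  { a | ∃ b : φ.κ → M, ∀ j : φ.ε,
      (∑ i, op (φ.A i j) • a i) + (∑ k, op (φ.B k j) • b k) = 0 }

/-- The solution set of a pp formula in a left `R`-module (the formula is then read
with coefficients acting on the left). -/
def solL (φ : PP R ι) (L : Type v) [AddCommGroup L] [Module R L] : Set (ι → L) :=
  { a | ∃ b : φ.κ → L, ∀ j : φ.ε,
      (∑ i, φ.A i j • a i) + (∑ k, φ.B k j • b k) = 0 }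

/-- `φ ≤ ψ` : every solution of `φ` is a solution of `ψ`, in every right `R`-module. -/
def Le (φ ψ : PP R ι) : Prop :=
  ∀ (M : Type u) [AddCommGroup M] [Module Rᵐᵒᵖ M], φ.sol M ⊆ ψ.sol M

/-- The elementary dual `Dφ = ∃ z̄ (x̄ = A z̄ ∧ B z̄ = 0)` of a pp formula for right modules;
it is a pp formula for left `R`-modules (to be interpreted via `solL`). -/
noncomputable def dual (φ : PP R ι) : PP R ι where
  κ := φ.ε
  ε := ι ⊕ φ.κ
  A := fun i e =>
    letI := Classical.decEq ι
    Sum.elim (fun i' => if i = i' then (1 : R) else 0) (fun _ => (0 : R)) e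
  B := fun z e => Sum.elim (fun i' => -(φ.A i' z)) (fun k => φ.B k z) e

/-- Transport of a pp formula along a ring homomorphism (`f⁎φ`). -/
def map (f : R →+* S) (φ : PP R ι) : PP S ι :=
  { κ := φ.κ, ε := φ.ε, A := fun i j => f (φ.A i j), B := fun k j => f (φ.B k j) }

end PP

variable (R : Type u) [Ring R] (S : Type u) [Ring S]

/-- A pp-pair `φ/ψ` for right `R`-modules: pp formulas (in `n` free variables)
with `ψ(M) ≤ φ(M)` for every right `R`-module `M`. -/
structure PPPair : Type (u + 1) where
  n : ℕ
  num : PP R (Fin n)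
  den : PP R (Fin n)
  le : ∀ (M : Type u) [AddCommGroup M] [Module Rᵐᵒᵖ M], den.sol M ⊆ num.sol M

/-- A pp-pair for left `R`-modules. -/
structure PPPairL : Type (u + 1) where
  n : ℕ
  num : PP R (Fin n)
  den : PP R (Fin n)
  le : ∀ (L : Type u) [AddCommGroup L] [Module R L], den.solL L ⊆ num.solL L

variable {R}

/-- A pp-pair is closed on a right module `M` if the two solution sets agree. -/
def PPPair.ClosedOn (p : PPPair R) (M : Type v) [AddCommGroup M] [Module Rᵐᵒᵖ M] : Prop :=
  p.num.sol M = p.den.sol M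

/-- A pp-pair is closed on a left module `L` if the two solution sets agree. -/
def PPPairL.ClosedOn (p : PPPairL R) (L : Type v) [AddCommGroup L] [Module R L] : Prop :=
  p.num.solL L = p.den.solL L

variable (R)

/-- The subcategory (class of modules, as a set of objects of `Mod-R`) defined by
closure of a set of pp-pairs. -/
def definedBy (Φ : Set (PPPair R)) : Set (ModuleCat.{u} Rᵐᵒᵖ) :=
  { M | ∀ p ∈ Φ, p.ClosedOn M }

/-- The subcategory of left modules defined by closure of a set of pp-pairs. -/
def definedByL (Φ : Set (PPPairL R)) : Set (ModuleCat.{u} R) :=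
  { L | ∀ p ∈ Φ, p.ClosedOn L }

/-- A class of right `R`-modules is a definable subcategory if it is the class of
modules on which each pp-pair in some set of pp-pairs is closed. -/
def IsDefinable (D : Set (ModuleCat.{u} Rᵐᵒᵖ)) : Prop :=
  ∃ Φ : Set (PPPair R), D = definedBy R Φ

/-- Definability for classes of left `R`-modules. -/
def IsDefinableL (D : Set (ModuleCat.{u} R)) : Prop :=
  ∃ Φ : Set (PPPairL R), D = definedByL R Φ

/-- `⟨X⟩`: the smallest definable subcategory of `Mod-R` containing `X`. -/
def gen (X : Set (ModuleCat.{u} Rᵐᵒᵖ)) : Set (ModuleCat.{u} Rᵐᵒᵖ) :=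
  ⋂₀ { D | IsDefinable R D ∧ X ⊆ D }

/-- `⟨X⟩` for classes of left modules. -/
def genL (X : Set (ModuleCat.{u} R)) : Set (ModuleCat.{u} R) :=
  ⋂₀ { D | IsDefinableL R D ∧ X ⊆ D }

/-- `φ ≤_𝒳 ψ` for a class `𝒳` of right `R`-modules. -/
def LeOn (𝒳 : Set (ModuleCat.{u} Rᵐᵒᵖ)) {ι : Type} [Fintype ι] (φ ψ : PP R ι) : Prop :=
  ∀ M ∈ 𝒳, φ.sol M ⊆ ψ.sol M

/-- A pure embedding of right `R`-modules: an injective linear map which reflects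
solution sets of pp formulas. -/
def IsPureEmb {M N : Type*} [AddCommGroup M] [Module Rᵐᵒᵖ M]
    [AddCommGroup N] [Module Rᵐᵒᵖ N] (f : M →ₗ[Rᵐᵒᵖ] N) : Prop :=
  Function.Injective f ∧
    ∀ (ι : Type) (_ : Fintype ι) (φ : PP R ι) (a : ι → M),
      (fun i => f (a i)) ∈ φ.sol N → a ∈ φ.sol M

/-- A pure-injective module: every pure embedding out of it splits. -/
def IsPureInj (N : Type u) [AddCommGroup N] [Module Rᵐᵒᵖ N] : Prop :=
  ∀ (M : Type u) [AddCommGroup M] [Module Rᵐᵒᵖ M] (g : N →ₗ[Rᵐᵒᵖ] M),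
    IsPureEmb R g → ∃ h : M →ₗ[Rᵐᵒᵖ] N, h.comp g = LinearMap.id

/-- `N` is an elementary cogenerator for the definable subcategory `D`:
a pure-injective member of `D` such that every member of `D` purely embeds in a
direct power of `N`. -/
def IsElemCogen (D : Set (ModuleCat.{u} Rᵐᵒᵖ)) (N : ModuleCat.{u} Rᵐᵒᵖ) : Prop :=
  N ∈ D ∧ IsPureInj R N ∧
    ∀ M ∈ D, ∃ (I : Type u) (g : M →ₗ[Rᵐᵒᵖ] (I → N)), IsPureEmb R g

/-- A pure-injective hull of `X`: a minimal pure embedding into a pure-injective. -/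
def IsPureInjHull {X H : Type u} [AddCommGroup X] [Module Rᵐᵒᵖ X]
    [AddCommGroup H] [Module Rᵐᵒᵖ H] (h : X →ₗ[Rᵐᵒᵖ] H) : Prop :=
  IsPureEmb R h ∧ IsPureInj R H ∧
    ∀ (Y : Type u) [AddCommGroup Y] [Module Rᵐᵒᵖ Y] (g : H →ₗ[Rᵐᵒᵖ] Y),
      IsPureEmb R (g.comp h) → IsPureEmb R g

section RingHom

variable (f : R →+* S)

/-- Restriction of scalars of a (bundled) right `S`-module along `f : R →+* S`. -/
noncomputable def resMod (M : ModuleCat.{u} Sᵐᵒᵖ) : ModuleCat.{u} Rᵐᵒᵖ :=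
  (ModuleCat.restrictScalars (RingHom.op f)).obj M

/-- The (definable) restriction `C|_R` of a definable subcategory `C` of `Mod-S`
along `f : R → S` : the subcategory of `Mod-R` defined by all pp-pairs `φ/ψ` for
`R`-modules such that `f⁎φ/f⁎ψ` is closed on `C`. -/
def restrictSubcat (C : Set (ModuleCat.{u} Sᵐᵒᵖ)) : Set (ModuleCat.{u} Rᵐᵒᵖ) :=
  definedBy R { p : PPPair R | ∀ M ∈ C, (p.num.map f).sol M = (p.den.map f).sol M }

/-- The definable trace of `Mod-S` in `Mod-R` along `f`. -/
def DefTr : Set (ModuleCat.{u} Rᵐᵒᵖ) := restrictSubcat R S f Set.univ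

/-- The direct extension `D^S` of a definable subcategory `D` of `Mod-R`:
those `S`-modules whose restriction along `f` lies in `D`. -/
def directExt (D : Set (ModuleCat.{u} Rᵐᵒᵖ)) : Set (ModuleCat.{u} Sᵐᵒᵖ) :=
  { M | resMod R S f M ∈ D }

end RingHom

end MTM
-- Tensor product over a (possibly noncommutative) ring.
namespace MTM

open MulOpposite TensorProduct

universe x
variable (R : Type u) [Ring R] (S : Type u) [Ring S]

section Tensor

variable (M : Type u) [AddCommGroup M] [Module Rᵐᵒᵖ M]
variable (B : Type u) [AddCommGroup B] [Module R B]

/-- The subgroup of `M ⊗_ℤ B` of balancing relations. -/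
def tensorRel : Submodule ℤ (TensorProduct ℤ M B) :=
  Submodule.span ℤ
    { x | ∃ (r : R) (m : M) (b : B), x = (op r • m) ⊗ₜ[ℤ] b - m ⊗ₜ[ℤ] (r • b) }

/-- The tensor product `M ⊗_R B` of a right `R`-module and a left `R`-module,
as the quotient of `M ⊗_ℤ B` by the balancing relations. -/
abbrev RTensor : Type u := TensorProduct ℤ M B ⧸ tensorRel R M B

/-- `m ⊗ b` in `M ⊗_R B`. -/
noncomputable def rtmul (m : M) (b : B) : RTensor R M B := Submodule.Quotient.mk (m ⊗ₜ[ℤ] b)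

variable {M B}
variable {M' : Type u} [AddCommGroup M'] [Module Rᵐᵒᵖ M']
variable {B' : Type u} [AddCommGroup B'] [Module R B']

theorem rel_le_B (g : B →ₗ[R] B') :
    tensorRel R M B ≤
      (tensorRel R M B').comap (LinearMap.lTensor M g.toAddMonoidHom.toIntLinearMap) := by
  intro x hx
  change LinearMap.lTensor M g.toAddMonoidHom.toIntLinearMap x ∈ tensorRel R M B'
  refine Submodule.span_induction ?_ ?_ ?_ ?_ hx
  · rintro _ ⟨r, m, b, rfl⟩
    simp only [map_sub, LinearMap.lTensor_tmul,
      AddMonoidHom.coe_toIntLinearMap, LinearMap.toAddMonoidHom_coe]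
    rw [g.map_smul]
    exact Submodule.subset_span ⟨r, m, g b, rfl⟩
  · rw [map_zero]
    exact zero_mem _
  · intro x y _ _ hx hy
    rw [map_add]
    exact add_mem hx hy
  · intro a x _ hx
    rw [map_zsmul]
    exact zsmul_mem hx a

theorem rel_le_M (h : M →ₗ[Rᵐᵒᵖ] M') :
    tensorRel R M B ≤
      (tensorRel R M' B).comap (LinearMap.rTensor B h.toAddMonoidHom.toIntLinearMap) := by
  intro x hx
  change LinearMap.rTensor B h.toAddMonoidHom.toIntLinearMap x ∈ tensorRel R M' B
  refine Submodule.span_induction ?_ ?_ ?_ ?_ hx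
  · rintro _ ⟨r, m, b, rfl⟩
    simp only [map_sub, LinearMap.rTensor_tmul,
      AddMonoidHom.coe_toIntLinearMap, LinearMap.toAddMonoidHom_coe]
    rw [h.map_smul]
    exact Submodule.subset_span ⟨r, h m, b, rfl⟩
  · rw [map_zero]
    exact zero_mem _
  · intro x y _ _ hx hy
    rw [map_add]
    exact add_mem hx hy
  · intro a x _ hx
    rw [map_zsmul]
    exact zsmul_mem hx a

/-- Functoriality of `M ⊗_R -` in left `R`-module maps (as a `ℤ`-linear map). -/
noncomputable def mapB (g : B →ₗ[R] B') : RTensor R M B →ₗ[ℤ] RTensor R M B' :=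
  Submodule.mapQ _ _ _ (rel_le_B R g)

/-- Functoriality of `- ⊗_R B` in right `R`-module maps (as a `ℤ`-linear map). -/
noncomputable def mapM (h : M →ₗ[Rᵐᵒᵖ] M') : RTensor R M B →ₗ[ℤ] RTensor R M' B :=
  Submodule.mapQ _ _ _ (rel_le_M R h)

@[simp] theorem mapB_mk (g : B →ₗ[R] B') (y : TensorProduct ℤ M B) :
    mapB R g (Submodule.Quotient.mk y) =
      Submodule.Quotient.mk (LinearMap.lTensor M g.toAddMonoidHom.toIntLinearMap y) :=
  rfl

@[simp] theorem mapM_mk (h : M →ₗ[Rᵐᵒᵖ] M') (y : TensorProduct ℤ M B) :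
    mapM R h (Submodule.Quotient.mk y) =
      Submodule.Quotient.mk (LinearMap.rTensor B h.toAddMonoidHom.toIntLinearMap y) :=
  rfl

section SAction

variable [Module Sᵐᵒᵖ B] [SMulCommClass R Sᵐᵒᵖ B]

/-- The right action of `s : S` on an `(R,S)`-bimodule, as a left `R`-linear map. -/
def sEndo (s : Sᵐᵒᵖ) : B →ₗ[R] B where
  toFun b := s • b
  map_add' x y := smul_add s x y
  map_smul' r b := (smul_comm r s b).symm

variable (M B)

/-- The right `S`-action on `M ⊗_R B` as a ring homomorphism `Sᵐᵒᵖ → End_ℤ (M ⊗_R B)`. -/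
noncomputable def rho : Sᵐᵒᵖ →+* Module.End ℤ (RTensor R M B) where
  toFun s := mapB R (sEndo R S (B := B) s)
  map_one' := by
    refine Submodule.linearMap_qext _ (TensorProduct.ext' fun m b => ?_)
    show mapB R (sEndo R S (B := B) 1) (Submodule.Quotient.mk (m ⊗ₜ[ℤ] b)) =
      Submodule.Quotient.mk (m ⊗ₜ[ℤ] b)
    simp only [mapB_mk, LinearMap.lTensor_tmul]
    simp [sEndo]
  map_mul' s s' := by
    refine Submodule.linearMap_qext _ (TensorProduct.ext' fun m b => ?_)
    show mapB R (sEndo R S (B := B) (s * s')) (Submodule.Quotient.mk (m ⊗ₜ[ℤ] b)) =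
      mapB R (sEndo R S (B := B) s) (mapB R (sEndo R S (B := B) s')
        (Submodule.Quotient.mk (m ⊗ₜ[ℤ] b)))
    simp only [mapB_mk, LinearMap.lTensor_tmul]
    simp only [AddMonoidHom.coe_toIntLinearMap, LinearMap.toAddMonoidHom_coe]
    simp [sEndo, mul_smul]
  map_zero' := by
    refine Submodule.linearMap_qext _ (TensorProduct.ext' fun m b => ?_)
    show mapB R (sEndo R S (B := B) 0) (Submodule.Quotient.mk (m ⊗ₜ[ℤ] b)) = 0
    simp only [mapB_mk, LinearMap.lTensor_tmul]
    simp [sEndo]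
  map_add' s s' := by
    refine Submodule.linearMap_qext _ (TensorProduct.ext' fun m b => ?_)
    show mapB R (sEndo R S (B := B) (s + s')) (Submodule.Quotient.mk (m ⊗ₜ[ℤ] b)) =
      mapB R (sEndo R S (B := B) s) (Submodule.Quotient.mk (m ⊗ₜ[ℤ] b)) +
        mapB R (sEndo R S (B := B) s') (Submodule.Quotient.mk (m ⊗ₜ[ℤ] b))
    simp only [mapB_mk, LinearMap.lTensor_tmul]
    simp only [AddMonoidHom.coe_toIntLinearMap, LinearMap.toAddMonoidHom_coe]
    simp [sEndo, add_smul, TensorProduct.tmul_add]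

/-- The right `S`-module structure on `M ⊗_R B` for an `(R,S)`-bimodule `B`. -/
noncomputable instance instModS : Module Sᵐᵒᵖ (RTensor R M B) :=
  Module.compHom _ (rho R S M B)

theorem smul_mk (s : Sᵐᵒᵖ) (y : TensorProduct ℤ M B) :
    s • (Submodule.Quotient.mk y : RTensor R M B) =
      Submodule.Quotient.mk
        (LinearMap.lTensor M ((sEndo R S (B := B) s).toAddMonoidHom.toIntLinearMap) y) :=
  rfl

@[simp] theorem smul_rtmul (s : Sᵐᵒᵖ) (m : M) (b : B) :
    s • rtmul R M B m b = rtmul R M B m (s • b) :=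
  rfl

end SAction

end Tensor

end MTM
namespace MTM

open MulOpposite TensorProduct

variable (R : Type u) [Ring R] (S : Type u) [Ring S]

section TensorMaps

variable (M : Type u) [AddCommGroup M] [Module Rᵐᵒᵖ M]
variable {M' : Type u} [AddCommGroup M'] [Module Rᵐᵒᵖ M']
variable (B : Type u) [AddCommGroup B] [Module R B] [Module Sᵐᵒᵖ B] [SMulCommClass R Sᵐᵒᵖ B]
variable {B' : Type u} [AddCommGroup B'] [Module R B'] [Module Sᵐᵒᵖ B'] [SMulCommClass R Sᵐᵒᵖ B']

/-- Functoriality of `M ⊗_R -` in maps of `(R,S)`-bimodules, as a map of right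
`S`-modules. -/
noncomputable def mapBS (g : B →ₗ[R] B') (hg : ∀ (s : Sᵐᵒᵖ) (b : B), g (s • b) = s • g b) :
    RTensor R M B →ₗ[Sᵐᵒᵖ] RTensor R M B' where
  toFun := mapB R g
  map_add' := map_add _
  map_smul' s x := by
    obtain ⟨y, rfl⟩ := Submodule.Quotient.mk_surjective _ x
    show mapB R g (s • Submodule.Quotient.mk y) = s • mapB R g (Submodule.Quotient.mk y)
    rw [smul_mk R S, mapB_mk, mapB_mk, smul_mk R S,
      ← LinearMap.comp_apply, ← LinearMap.comp_apply, ← LinearMap.lTensor_comp,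
      ← LinearMap.lTensor_comp]
    have hcomp : g.toAddMonoidHom.toIntLinearMap ∘ₗ
          (sEndo R S (B := B) s).toAddMonoidHom.toIntLinearMap =
        (sEndo R S (B := B') s).toAddMonoidHom.toIntLinearMap ∘ₗ
          g.toAddMonoidHom.toIntLinearMap := by
      ext b
      exact hg s b
    rw [hcomp]

/-- Functoriality of `- ⊗_R B` in maps of right `R`-modules, as a map of right
`S`-modules. -/
noncomputable def mapMS (h : M →ₗ[Rᵐᵒᵖ] M') :
    RTensor R M B →ₗ[Sᵐᵒᵖ] RTensor R M' B where
  toFun := mapM R h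
  map_add' := map_add _
  map_smul' s x := by
    obtain ⟨y, rfl⟩ := Submodule.Quotient.mk_surjective _ x
    show mapM R h (s • Submodule.Quotient.mk y) = s • mapM R h (Submodule.Quotient.mk y)
    rw [smul_mk R S, mapM_mk, mapM_mk, smul_mk R S,
      ← LinearMap.comp_apply, ← LinearMap.comp_apply, LinearMap.rTensor_comp_lTensor,
      LinearMap.lTensor_comp_rTensor]

end TensorMaps

section Canonical

variable (M : Type u) [AddCommGroup M] [Module Rᵐᵒᵖ M]

/-- The canonical map `M ⊗_R (∏ᵢ Lᵢ) → ∏ᵢ (M ⊗_R Lᵢ)` for a family of left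
`R`-modules, as a `ℤ`-linear map. -/
noncomputable def canonicalL {ι' : Type u} (L : ι' → Type u)
    [∀ i, AddCommGroup (L i)] [∀ i, Module R (L i)] :
    RTensor R M (∀ i, L i) →ₗ[ℤ] ∀ i, RTensor R M (L i) :=
  LinearMap.pi fun i => mapB R (LinearMap.proj i)

/-- The canonical map `M ⊗_R (∏ᵢ Lᵢ) → ∏ᵢ (M ⊗_R Lᵢ)` for a family of
`(R,S)`-bimodules, as a map of right `S`-modules. -/
noncomputable def canonicalB {ι' : Type u} (L : ι' → Type u)
    [∀ i, AddCommGroup (L i)] [∀ i, Module R (L i)] [∀ i, Module Sᵐᵒᵖ (L i)]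
    [∀ i, SMulCommClass R Sᵐᵒᵖ (L i)] :
    RTensor R M (∀ i, L i) →ₗ[Sᵐᵒᵖ] ∀ i, RTensor R M (L i) :=
  LinearMap.pi fun i => mapBS R S M (∀ j, L j) (LinearMap.proj i) (fun _ _ => rfl)

/-- The canonical map `(∏_λ M_λ) ⊗_R B → ∏_λ (M_λ ⊗_R B)` for a family of right
`R`-modules and an `(R,S)`-bimodule `B`, as a map of right `S`-modules. -/
noncomputable def canonicalM {ι' : Type u} (N : ι' → Type u)
    [∀ i, AddCommGroup (N i)] [∀ i, Module Rᵐᵒᵖ (N i)]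
    (B : Type u) [AddCommGroup B] [Module R B] [Module Sᵐᵒᵖ B] [SMulCommClass R Sᵐᵒᵖ B] :
    RTensor R (∀ i, N i) B →ₗ[Sᵐᵒᵖ] ∀ i, RTensor R (N i) B :=
  LinearMap.pi fun i => mapMS R S (∀ j, N j) B (LinearMap.proj i)

end Canonical

section UnitMap

variable (M : Type u) [AddCommGroup M] [Module Rᵐᵒᵖ M]
variable (B : Type u) [AddCommGroup B] [Module R B] [Module Rᵐᵒᵖ B] [SMulCommClass R Rᵐᵒᵖ B]

/-- For an `(R,R)`-bimodule `B` and a central-ish element `e` (e.g. `1 ∈ S` for a ring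
extension `R → S`), the canonical map `M → M ⊗_R B`, `a ↦ a ⊗ e`, as a map of right
`R`-modules. -/
noncomputable def unitMap (e : B) (he : ∀ r : R, r • e = op r • e) :
    M →ₗ[Rᵐᵒᵖ] RTensor R M B where
  toFun m := rtmul R M B m e
  map_add' m m' := by
    show Submodule.Quotient.mk _ = Submodule.Quotient.mk _ + Submodule.Quotient.mk _
    rw [← Submodule.Quotient.mk_add, TensorProduct.add_tmul]
  map_smul' r m := by
    show rtmul R M B (r • m) e = r • rtmul R M B m e
    rw [smul_rtmul]
    rw [rtmul, rtmul, Submodule.Quotient.eq]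
    have : (r • e : B) = (r.unop : R) • e := (he r.unop).symm
    rw [this]
    exact Submodule.subset_span ⟨r.unop, m, e, by rw [op_unop]⟩

end UnitMap

end MTM
namespace MTM

open MulOpposite

variable (R : Type u) [Ring R] (S : Type u) [Ring S]

/-! ### pp formulas for `(R,S)`-bimodules -/

/-- The action of a formal coefficient `∑ (r,s)` of the bimodule language on an
element of an `(R,S)`-bimodule: `b ↦ ∑ r b s`. -/
def cAct (c : List (R × S)) {B : Type v} [AddCommGroup B] [Module R B] [Module Sᵐᵒᵖ B]
    (b : B) : B :=
  (c.map fun p => p.1 • (op p.2 • b)).sum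

/-- A pp formula for `(R,S)`-bimodules (equivalently, for right `Rᵒᵖ ⊗ S`-modules):
coefficients are formal sums of pairs `(r,s)`, acting by `x ↦ ∑ r x s`. -/
structure BiPP (ι : Type) : Type (max u 1) where
  κ : Type
  ε : Type
  [fintκ : Fintype κ]
  [fintε : Fintype ε]
  A : Matrix ι ε (List (R × S))
  B : Matrix κ ε (List (R × S))

attribute [instance] BiPP.fintκ BiPP.fintε

variable {R S} in
/-- Solution set of a bimodule pp formula in an `(R,S)`-bimodule. -/
def BiPP.sol {ι : Type} [Fintype ι] (θ : BiPP R S ι) (Bm : Type v) [AddCommGroup Bm]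
    [Module R Bm] [Module Sᵐᵒᵖ Bm] : Set (ι → Bm) :=
  { a | ∃ b : θ.κ → Bm, ∀ j : θ.ε,
      (∑ i, cAct R S (θ.A i j) (a i)) + (∑ k, cAct R S (θ.B k j) (b k)) = 0 }

/-- A bundled `(R,S)`-bimodule. -/
structure Bimod : Type (u + 1) where
  carrier : Type u
  [addCommGroup : AddCommGroup carrier]
  [modR : Module R carrier]
  [modSop : Module Sᵐᵒᵖ carrier]
  [smulComm : SMulCommClass R Sᵐᵒᵖ carrier]

attribute [instance] Bimod.addCommGroup Bimod.modR Bimod.modSop Bimod.smulComm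

instance : CoeSort (Bimod R S) (Type u) := ⟨Bimod.carrier⟩

/-- Bundling an `(R,S)`-bimodule. -/
def Bimod.of (B : Type u) [AddCommGroup B] [Module R B] [Module Sᵐᵒᵖ B]
    [SMulCommClass R Sᵐᵒᵖ B] : Bimod R S :=
  ⟨B⟩

/-- A pp-pair for `(R,S)`-bimodules. -/
structure BiPPPair : Type (max u 1) where
  n : ℕ
  num : BiPP R S (Fin n)
  den : BiPP R S (Fin n)
  le : ∀ Bm : Bimod R S, den.sol Bm ⊆ num.sol Bm

variable {R S} in
/-- Closedness of a bimodule pp-pair on a bimodule. -/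
def BiPPPair.ClosedOn (p : BiPPPair R S) (Bm : Type v) [AddCommGroup Bm] [Module R Bm]
    [Module Sᵐᵒᵖ Bm] : Prop :=
  p.num.sol Bm = p.den.sol Bm

/-- The class of bimodules defined by closure of a set of bimodule pp-pairs. -/
def biDefinedBy (Φ : Set (BiPPPair R S)) : Set (Bimod R S) :=
  { Bm | ∀ p ∈ Φ, p.ClosedOn Bm }

/-- Definable subcategories of the category `R-Mod-S` of `(R,S)`-bimodules. -/
def IsDefinableBi (𝓑 : Set (Bimod R S)) : Prop :=
  ∃ Φ : Set (BiPPPair R S), 𝓑 = biDefinedBy R S Φ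

/-- The smallest definable subcategory of `R-Mod-S` containing `X`. -/
def genBi (X : Set (Bimod R S)) : Set (Bimod R S) :=
  ⋂₀ { 𝓑 | IsDefinableBi R S 𝓑 ∧ X ⊆ 𝓑 }

/-- `θ ≤_𝓑 θ'` for a class `𝓑` of bimodules. -/
def BiLeOn (𝓑 : Set (Bimod R S)) {ι : Type} [Fintype ι] (θ θ' : BiPP R S ι) : Prop :=
  ∀ Bm ∈ 𝓑, θ.sol Bm ⊆ θ'.sol Bm

/-! ### Partitioned tuples, `(σ:φ)` and atomicity with respect to a bimodule -/

/-- The index type of a `ν`-partitioned tuple: `k` blocks, the `t`-th of size `ν t`. -/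
abbrev PIdx {k : ℕ} (ν : Fin k → ℕ) : Type := (t : Fin k) × Fin (ν t)

/-- The tensor product of matching partitioned tuples: the `k`-tuple
`(ā₁ ⊗ b̄₁, …, ā_k ⊗ b̄_k)` where `ā_t ⊗ b̄_t = ∑_j a_{tj} ⊗ b_{tj}`. -/
noncomputable def ptensor (M : Type u) [AddCommGroup M] [Module Rᵐᵒᵖ M] (B : Type u)
    [AddCommGroup B] [Module R B] {k : ℕ} {ν : Fin k → ℕ}
    (a : PIdx ν → M) (b : PIdx ν → B) : Fin k → RTensor R M B :=
  fun t => ∑ j : Fin (ν t), rtmul R M B (a ⟨t, j⟩) (b ⟨t, j⟩)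

variable {R}

/-- The pp-type of `ā` in `M` is generated by `φ`: `pp^M(ā) = {ψ : φ ≤ ψ}`. -/
def GeneratedBy {ι : Type} [Fintype ι] {M : Type u} [AddCommGroup M] [Module Rᵐᵒᵖ M]
    (a : ι → M) (φ : PP R ι) : Prop :=
  ∀ ψ : PP R ι, a ∈ ψ.sol M ↔ φ.Le ψ

/-- The pp-type of `ā` in `M` is `𝒳`-generated by `φ`: `pp^M(ā) = {ψ : φ ≤_𝒳 ψ}`. -/
def GeneratedByOn (𝒳 : Set (ModuleCat.{u} Rᵐᵒᵖ)) {ι : Type} [Fintype ι] {M : Type u}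
    [AddCommGroup M] [Module Rᵐᵒᵖ M] (a : ι → M) (φ : PP R ι) : Prop :=
  ∀ ψ : PP R ι, a ∈ ψ.sol M ↔ LeOn R 𝒳 φ ψ

variable (R)

/-- An assignment `(σ, φ) ↦ (σ:φ)` of a bimodule pp formula to each pp formula `σ`
for right `S`-modules (in `k` free variables) and each matching partitioned pp
formula `φ` for right `R`-modules. -/
def ColonAsgn : Type (max u 1) :=
  ∀ (k : ℕ) (ν : Fin k → ℕ), PP S (Fin k) → PP R (PIdx ν) → BiPP R S (PIdx ν)

/-- The characterizing property of the assignment `(σ, φ) ↦ (σ:φ)`: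
(1) if `ā ∈ φ(M)` and `b̄ ∈ (σ:φ)(B)` then `ā ⊗ b̄ ∈ σ(M ⊗_R B)`;
(2) if `pp^M(ā)` is generated by `φ` then `ā ⊗ b̄ ∈ σ(M ⊗_R B)` iff `b̄ ∈ (σ:φ)(B)`. -/
def ColonSpec (c : ColonAsgn R S) : Prop :=
  ∀ (k : ℕ) (ν : Fin k → ℕ) (σ : PP S (Fin k)) (φ : PP R (PIdx ν))
    (M : Type u) [AddCommGroup M] [Module Rᵐᵒᵖ M]
    (Bm : Type u) [AddCommGroup Bm] [Module R Bm] [Module Sᵐᵒᵖ Bm]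
    [SMulCommClass R Sᵐᵒᵖ Bm] (a : PIdx ν → M) (b : PIdx ν → Bm),
    (a ∈ φ.sol M → b ∈ (c k ν σ φ).sol Bm →
      ptensor R M Bm a b ∈ σ.sol (RTensor R M Bm)) ∧
    (GeneratedBy a φ →
      (ptensor R M Bm a b ∈ σ.sol (RTensor R M Bm) ↔ b ∈ (c k ν σ φ).sol Bm))

/-- `M` is atomic with respect to the `(R,S)`-bimodule `B` (relative to a choice `c`
of the assignment `(σ,φ) ↦ (σ:φ)`): for every partitioned finite tuple `ā` from `M`
and every pp formula `σ` for right `S`-modules there is `φ ∈ pp^M(ā)` such that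
`(σ:φ)(B)` is the largest among the `(σ:ψ)(B)` with `ψ ∈ pp^M(ā)`. -/
def AtomicWrt (c : ColonAsgn R S) (M : Type u) [AddCommGroup M] [Module Rᵐᵒᵖ M]
    (Bm : Type u) [AddCommGroup Bm] [Module R Bm] [Module Sᵐᵒᵖ Bm] : Prop :=
  ∀ (k : ℕ) (ν : Fin k → ℕ) (σ : PP S (Fin k)) (a : PIdx ν → M),
    ∃ φ : PP R (PIdx ν), a ∈ φ.sol M ∧
      ∀ ψ : PP R (PIdx ν), a ∈ ψ.sol M → (c k ν σ ψ).sol Bm ⊆ (c k ν σ φ).sol Bm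

/-! ### Mittag-Leffler modules, atomic modules -/

/-- `M` is Mittag-Leffler: the canonical map `M ⊗_R ∏ᵢ Lᵢ → ∏ᵢ (M ⊗_R Lᵢ)` is
injective for every family of left `R`-modules. -/
def IsML (M : Type u) [AddCommGroup M] [Module Rᵐᵒᵖ M] : Prop :=
  ∀ (ι' : Type u) (L : ι' → Type u) (_ : ∀ i, AddCommGroup (L i))
    (_ : ∀ i, Module R (L i)), Function.Injective (canonicalL R M L)

/-- `M` is `𝒳`-Mittag-Leffler for a class `𝒳` of left `R`-modules. -/
def IsMLOn (𝒳 : Set (ModuleCat.{u} R)) (M : Type u) [AddCommGroup M] [Module Rᵐᵒᵖ M] :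
    Prop :=
  ∀ (ι' : Type u) (L : ι' → Type u) (_ : ∀ i, AddCommGroup (L i))
    (_ : ∀ i, Module R (L i)),
    (∀ i, ModuleCat.of R (L i) ∈ 𝒳) → Function.Injective (canonicalL R M L)

/-- `M` is `D`-atomic: the pp-type of every finite tuple from `M` is `D`-finitely
generated. -/
def AtomicOn (D : Set (ModuleCat.{u} Rᵐᵒᵖ)) (M : Type u) [AddCommGroup M]
    [Module Rᵐᵒᵖ M] : Prop :=
  ∀ (n : ℕ) (a : Fin n → M), ∃ φ : PP R (Fin n), GeneratedByOn D a φ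

/-- The elementary dual `⟨K⟩ᵈ ⊆ Mod-R` of the definable subcategory of `R-Mod`
generated by a class `K` of left `R`-modules: it is defined by the pp-pairs for right
`R`-modules whose (elementary) dual pp-pair is closed on `⟨K⟩`. -/
def dualCat (K : Set (ModuleCat.{u} R)) : Set (ModuleCat.{u} Rᵐᵒᵖ) :=
  definedBy R { p : PPPair R |
    ∀ L ∈ genL R K, (p.num.dual).solL L = (p.den.dual).solL L }

/-! ### Pure projectivity, finite genericity, pure cogenerators -/

/-- A left `R`-module is pure-projective if it is a direct summand of a direct sum of
finitely presented left `R`-modules. -/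
def IsPureProjL (B : Type u) [AddCommGroup B] [Module R B] : Prop :=
  ∃ (ι : Type u) (_ : DecidableEq ι) (F : ι → Type u) (_ : ∀ i, AddCommGroup (F i))
    (_ : ∀ i, Module R (F i)) (_ : ∀ i, Module.FinitePresentation R (F i))
    (e : B →ₗ[R] DirectSum ι F) (p : DirectSum ι F →ₗ[R] B), p.comp e = LinearMap.id

/-- `M` is finitely generic in the definable subcategory `D`: for every pp formula
`φ` there is a tuple from `M` whose pp-type is `D`-generated by `φ`. -/
def FinGeneric (D : Set (ModuleCat.{u} Rᵐᵒᵖ)) (M : Type u) [AddCommGroup M]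
    [Module Rᵐᵒᵖ M] : Prop :=
  ModuleCat.of Rᵐᵒᵖ M ∈ D ∧
    ∀ (ι : Type) (_ : Fintype ι) (φ : PP R ι), ∃ a : ι → M, GeneratedByOn D a φ

variable {R S}

/-- The pp-type of a tuple in a bimodule is `𝓑`-generated by `θ`. -/
def BiGeneratedByOn (𝓑 : Set (Bimod R S)) {ι : Type} [Fintype ι] {Bm : Type u}
    [AddCommGroup Bm] [Module R Bm] [Module Sᵐᵒᵖ Bm] (b : ι → Bm) (θ : BiPP R S ι) :
    Prop :=
  ∀ θ' : BiPP R S ι, b ∈ θ'.sol Bm ↔ BiLeOn R S 𝓑 θ θ'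

variable (R S)

/-- A bimodule is finitely generic in a definable subcategory `𝓑` of `R-Mod-S`. -/
def FinGenericBi (𝓑 : Set (Bimod R S)) (Bm : Type u) [AddCommGroup Bm] [Module R Bm]
    [Module Sᵐᵒᵖ Bm] [SMulCommClass R Sᵐᵒᵖ Bm] : Prop :=
  Bimod.of R S Bm ∈ 𝓑 ∧
    ∀ (ι : Type) (_ : Fintype ι) (θ : BiPP R S ι), ∃ b : ι → Bm, BiGeneratedByOn 𝓑 b θ

end MTM
namespace MTM

open MulOpposite

variable (R : Type u) [Ring R] (S : Type u) [Ring S]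

/-! ### Tensor extension of definable subcategories -/

section TensorExt

variable (B : Type u) [AddCommGroup B] [Module R B] [Module Sᵐᵒᵖ B] [SMulCommClass R Sᵐᵒᵖ B]

/-- The set `{M ⊗_R B : M ∈ D}` of right `S`-modules. -/
noncomputable def tensorExtSet (D : Set (ModuleCat.{u} Rᵐᵒᵖ)) : Set (ModuleCat.{u} Sᵐᵒᵖ) :=
  { N | ∃ M ∈ D, N = ModuleCat.of Sᵐᵒᵖ (RTensor R M B) }

/-- The tensor extension `D ⊗_R B`: the definable subcategory of `Mod-S` generated by
`{M ⊗_R B : M ∈ D}`. -/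
noncomputable def tensorExt (D : Set (ModuleCat.{u} Rᵐᵒᵖ)) : Set (ModuleCat.{u} Sᵐᵒᵖ) :=
  gen S (tensorExtSet R S B D)

end TensorExt

/-- `D ⊗ 𝓑` for a definable subcategory `D` of `Mod-R` and a definable subcategory
`𝓑` of `R-Mod-S`: the definable subcategory of `Mod-S` generated by the modules
`M ⊗_R B` with `M ∈ D`, `B ∈ 𝓑`. -/
noncomputable def tensorProd (D : Set (ModuleCat.{u} Rᵐᵒᵖ)) (𝓑 : Set (Bimod R S)) :
    Set (ModuleCat.{u} Sᵐᵒᵖ) :=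
  gen S { N | ∃ M ∈ D, ∃ Bm ∈ 𝓑, N = ModuleCat.of Sᵐᵒᵖ (RTensor R M Bm) }

/-! ### Directed colimits -/

open CategoryTheory CategoryTheory.Limits in
/-- `M` is a directed colimit of modules satisfying `P`. -/
def IsDirectedColimitOf (M : ModuleCat.{u} Rᵐᵒᵖ) (P : ModuleCat.{u} Rᵐᵒᵖ → Prop) :
    Prop :=
  ∃ (J : Type u) (_ : Preorder J) (_ : IsDirected J (· ≤ ·)) (_ : Nonempty J)
    (F : J ⥤ ModuleCat.{u} Rᵐᵒᵖ) (c : Cocone F),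
    Nonempty (IsColimit c) ∧ Nonempty (c.pt ≅ M) ∧ ∀ j, P (F.obj j)

/-! ### Elementary embeddings of rings -/

open FirstOrder in
/-- `f : R →+* S` is an elementary embedding of rings: there is a model-theoretic
elementary embedding (for the first-order language of rings) whose underlying
function is `f`.  (Elementary embeddings preserve and reflect all first-order
formulas at all tuples of parameters from `R`.) -/
def IsElemRingEmb (f : R →+* S) : Prop :=
  letI := FirstOrder.Ring.compatibleRingOfRing R
  letI := FirstOrder.Ring.compatibleRingOfRing S
  ∃ F : Language.ring.ElementaryEmbedding R S, ∀ r : R, F r = f r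

/-! ### Bimodule structures along a ring homomorphism -/

section AlongHom

variable (f : R →+* S)

/-- The left `R`-module structure on `S` along `f`. -/
def modLeft : Module R S := Module.compHom S f

/-- The right `R`-module structure on `S` along `f`. -/
def modRight : Module Rᵐᵒᵖ S := Module.compHom S (RingHom.op f)

/-- `S` is an `(R,S)`-bimodule along `f`. -/
theorem smulComm_RS :
    letI := modLeft R S f
    SMulCommClass R Sᵐᵒᵖ S := by
  letI := modLeft R S f
  constructor
  intro r s x
  show f r * (x * s.unop) = (f r * x) * s.unop
  rw [mul_assoc]

/-- `S` is an `(R,R)`-bimodule along `f`. -/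
theorem smulComm_RR :
    letI := modLeft R S f
    letI := modRight R S f
    SMulCommClass R Rᵐᵒᵖ S := by
  letI := modLeft R S f
  letI := modRight R S f
  constructor
  intro r r' x
  show f r * (x * f r'.unop) = (f r * x) * f r'.unop
  rw [mul_assoc]

end AlongHom

end MTM
namespace MTM

open MulOpposite

variable (R : Type u) [Ring R] (S : Type u) [Ring S]

/-- A pure embedding of `(R,S)`-bimodules: an injective map of bimodules which
reflects solution sets of bimodule pp formulas. -/
def IsBiPureEmb {B B' : Type u} [AddCommGroup B] [Module R B] [Module Sᵐᵒᵖ B]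
    [AddCommGroup B'] [Module R B'] [Module Sᵐᵒᵖ B']
    (g : B →ₗ[R] B') (_ : ∀ (s : Sᵐᵒᵖ) (b : B), g (s • b) = s • g b) : Prop :=
  Function.Injective g ∧
    ∀ (ι : Type) (_ : Fintype ι) (θ : BiPP R S ι) (a : ι → B),
      (fun i => g (a i)) ∈ θ.sol B' → a ∈ θ.sol B

/-- The ring `S`, viewed as an `(R,S)`-bimodule (and as an `(R,R)`-bimodule) along a
ring homomorphism `f : R →+* S`. -/
def SAlong (f : R →+* S) : Type u := S

namespace SAlong

variable (f : R →+* S)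

instance : AddCommGroup (SAlong R S f) := inferInstanceAs (AddCommGroup S)
instance : Module R (SAlong R S f) := Module.compHom S f
instance : Module Sᵐᵒᵖ (SAlong R S f) := inferInstanceAs (Module Sᵐᵒᵖ S)
instance : Module Rᵐᵒᵖ (SAlong R S f) := Module.compHom S (RingHom.op f)

instance : SMulCommClass R Sᵐᵒᵖ (SAlong R S f) := smulComm_RS R S f

instance : SMulCommClass R Rᵐᵒᵖ (SAlong R S f) := smulComm_RR R S f

/-- The element `1 ∈ S`. -/
def one : SAlong R S f := (1 : S)

theorem smul_one : ∀ r : R, r • (one R S f) = op r • (one R S f) := by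
  intro r
  show f r * (1 : S) = (1 : S) * f r
  rw [mul_one, one_mul]

end SAlong

end MTM

/-!
Restriction along `f` turns `(f⁎φ)(M)` into `φ(M_R)`, so `C|_R` is defined by the pp-pairs
closed on every `M_R` with `M ∈ C`; since pure embeddings reflect pp formulas, pure submodules
of such `M_R` lie in `C|_R`.

Conversely let `M' ∈ C|_R`. For finitely many pp conditions true in `M'` and one false in `M'`,
the pair (conjunction of the true ones) / (that conjunction ∧ the false one) is not closed on
`M'`, hence not closed on some `M_R` with `M ∈ C`: this yields a map `M' → M` realizing the
true conditions and refuting the false one. Take the reduced product `Q` of these modules,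
indexed by (finite set of conditions, condition), along the filter generated by the sets
"contains `c`". By Łoś's theorem for pp formulas the induced map `M' → Q_R` preserves and
reflects all pp formulas, so it is linear, injective and pure (additivity, `R`-linearity and
`x = 0` being pp conditions), and `Q ∈ C` because definable subcategories are closed under
reduced products.
-/

namespace MTM

open MulOpposite

namespace PP

variable {R : Type u} [Ring R] {ι : Type} [Fintype ι]
  {M : Type v} [AddCommGroup M] [Module Rᵐᵒᵖ M] {N : Type*} [AddCommGroup N] [Module Rᵐᵒᵖ N]

theorem zero_mem_sol (φ : PP R ι) : (0 : ι → M) ∈ φ.sol M :=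
  ⟨0, fun j => by simp⟩

theorem comp_mem_sol (g : M →ₗ[Rᵐᵒᵖ] N) {φ : PP R ι} {a : ι → M} (ha : a ∈ φ.sol M) :
    g ∘ a ∈ φ.sol N := by
  obtain ⟨b, hb⟩ := ha
  exact ⟨g ∘ b, fun j => by simpa [map_add, map_sum, map_smul] using congrArg g (hb j)⟩

def conj (φ ψ : PP R ι) : PP R ι where
  κ := φ.κ ⊕ ψ.κ
  ε := φ.ε ⊕ ψ.ε
  A i := Sum.elim (φ.A i) (ψ.A i)
  B := Sum.elim (fun k => Sum.elim (φ.B k) 0) (fun k => Sum.elim 0 (ψ.B k))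

theorem mem_sol_conj {φ ψ : PP R ι} {a : ι → M} :
    a ∈ (conj φ ψ).sol M ↔ a ∈ φ.sol M ∧ a ∈ ψ.sol M := by
  have split (g : (conj φ ψ).κ → M) : ∑ k, g k = ∑ k, g (.inl k) + ∑ k, g (.inr k) :=
    Fintype.sum_sum_type g
  simp only [sol, Set.mem_ofPred_eq, split]
  constructor
  · rintro ⟨b, hb⟩
    refine ⟨⟨fun k => b (.inl k), fun j => ?_⟩, ⟨fun k => b (.inr k), fun j => ?_⟩⟩
    · simpa [conj] using hb (.inl j)
    · simpa [conj] using hb (.inr j)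
  · rintro ⟨⟨b, hb⟩, ⟨b', hb'⟩⟩
    refine ⟨Sum.elim b b', ?_⟩
    rintro (j | j)
    · simpa [conj] using hb j
    · simpa [conj] using hb' j

def top : PP R ι where
  κ := Empty
  ε := Empty
  A _ := Empty.elim
  B := Empty.elim

def conjList : List (PP R ι) → PP R ι
  | [] => top
  | φ :: l => conj φ (conjList l)

theorem mem_sol_conjList {l : List (PP R ι)} {a : ι → M} :
    a ∈ (conjList l).sol M ↔ ∀ φ ∈ l, a ∈ φ.sol M := by
  induction l with
  | nil => exact iff_of_true ⟨Empty.elim, fun j => j.elim⟩ (by simp)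
  | cons φ l ih => simp [conjList, mem_sol_conj, ih]

def relabel {ι' : Type} [DecidableEq ι'] (ρ : ι → ι') (φ : PP R ι) : PP R ι' where
  κ := φ.κ
  ε := φ.ε
  A i' j := ∑ i with ρ i = i', φ.A i j
  B := φ.B

theorem mem_sol_relabel {ι' : Type} [Fintype ι'] [DecidableEq ι'] (ρ : ι → ι') (φ : PP R ι)
    (a : ι' → M) : a ∈ (φ.relabel ρ).sol M ↔ a ∘ ρ ∈ φ.sol M := by
  have key : ∀ j, ∑ i', op ((φ.relabel ρ).A i' j) • a i' = ∑ i, op (φ.A i j) • a (ρ i) := by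
    intro j
    simp only [relabel, Finset.op_sum, Finset.sum_smul]
    rw [← Finset.sum_fiberwise Finset.univ ρ fun i => op (φ.A i j) • a (ρ i)]
    exact Finset.sum_congr rfl fun i' _ => Finset.sum_congr rfl fun i hi => by
      rw [(Finset.mem_filter.1 hi).2]
  simp only [sol, Set.mem_ofPred_eq, key]
  rfl

def linEq (c : ι → R) : PP R ι where
  κ := Empty
  ε := Unit
  A i _ := c i
  B := Empty.elim

theorem mem_sol_linEq {c : ι → R} {a : ι → M} :
    a ∈ (linEq c).sol M ↔ ∑ i, op (c i) • a i = 0 := by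
  have hB (j : (linEq c).ε) (b : (linEq c).κ → M) : ∑ k, op ((linEq c).B k j) • b k = 0 :=
    Finset.sum_eq_zero fun k _ => (k : Empty).elim
  refine ⟨fun ⟨b, hb⟩ => ?_, fun h => ⟨Empty.elim, fun j => ?_⟩⟩
  · rw [← add_zero (∑ i, _), ← hB () b]
    exact hb ()
  · exact (congrArg (_ + ·) (hB j _)).trans ((add_zero _).trans h)

end PP

section PureEmb

variable {R : Type u} [Ring R] {M N : Type*} [AddCommGroup M] [Module Rᵐᵒᵖ M]
  [AddCommGroup N] [Module Rᵐᵒᵖ N]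

theorem exists_isPureEmb_of_mem_sol_iff (g : M → N)
    (hg : ∀ (ι : Type) [Fintype ι] (φ : PP R ι) (a : ι → M), g ∘ a ∈ φ.sol N ↔ a ∈ φ.sol M) :
    ∃ g' : M →ₗ[Rᵐᵒᵖ] N, IsPureEmb R g' := by
  have lin_iff {n : ℕ} (c : Fin n → R) (a : Fin n → M) :
      ∑ i, op (c i) • g (a i) = 0 ↔ ∑ i, op (c i) • a i = 0 := by
    simpa only [PP.mem_sol_linEq, Function.comp_apply] using hg _ (PP.linEq c) a
  let g' : M →ₗ[Rᵐᵒᵖ] N :=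
    { toFun := g
      map_add' := fun x y => by
        have := (lin_iff ![1, 1, -1] ![x, y, x + y]).2 <| by
          simp only [Fin.sum_univ_three, Matrix.cons_val_zero, Matrix.cons_val_one,
            Matrix.cons_val, op_one, op_neg, one_smul, neg_smul]
          abel
        simp only [Fin.sum_univ_three, Matrix.cons_val_zero, Matrix.cons_val_one, Matrix.cons_val,
          op_one, op_neg, one_smul, neg_smul] at this
        exact (add_neg_eq_zero.1 this).symm
      map_smul' := fun r x => by
        have := (lin_iff ![r.unop, -1] ![x, r • x]).2 (by simp [Fin.sum_univ_two])
        simp only [Fin.sum_univ_two, Matrix.cons_val_zero, Matrix.cons_val_one,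
          Matrix.cons_val_fin_one, op_unop, op_neg, op_one, neg_smul, one_smul] at this
        exact (add_neg_eq_zero.1 this).symm }
  refine ⟨g', (injective_iff_map_eq_zero g').2 fun x hx => ?_, fun ι _ φ a => (hg ι φ a).1⟩
  change g x = 0 at hx
  simpa using (lin_iff ![1] ![x]).1 (by simpa using hx)

theorem PPPair.ClosedOn.of_isPureEmb {p : PPPair R} {M N : Type u} [AddCommGroup M]
    [Module Rᵐᵒᵖ M] [AddCommGroup N] [Module Rᵐᵒᵖ N] {g : M →ₗ[Rᵐᵒᵖ] N} (hg : IsPureEmb R g)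
    (hN : p.ClosedOn N) : p.ClosedOn M :=
  Set.Subset.antisymm
    (fun a ha => hg.2 _ _ p.den a (hN ▸ PP.comp_mem_sol g ha)) (p.le M)

end PureEmb

section ReducedProduct

variable (R : Type u) [Ring R] {I : Type*} (F : Filter I) (N : I → Type*)
  [∀ i, AddCommGroup (N i)] [∀ i, Module Rᵐᵒᵖ (N i)]

def eventuallyZero : Submodule Rᵐᵒᵖ (∀ i, N i) where
  carrier := {x | ∀ᶠ i in F, x i = 0}
  add_mem' hx hy := by filter_upwards [hx, hy] with i hx hy; simp [hx, hy]
  zero_mem' := by simp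
  smul_mem' r x hx := by filter_upwards [hx] with i hx; simp [hx]

abbrev ReducedProduct : Type _ := (∀ i, N i) ⧸ eventuallyZero R F N

variable {R F N}

/-- Łoś's theorem for pp formulas; it needs no ultrafilter. -/
theorem mem_sol_reducedProduct_iff {ι : Type} [Fintype ι] (φ : PP R ι) (x : ι → ∀ i, N i) :
    (fun j => (eventuallyZero R F N).mkQ (x j)) ∈ φ.sol (ReducedProduct R F N) ↔
      ∀ᶠ i in F, (fun j => x j i) ∈ φ.sol (N i) := by
  classical
  have mk_eq_zero (y : ∀ i, N i) : (eventuallyZero R F N).mkQ y = 0 ↔ ∀ᶠ i in F, y i = 0 :=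
    Submodule.Quotient.mk_eq_zero _
  constructor
  · rintro ⟨b, hb⟩
    choose b' hb' using fun k => Submodule.mkQ_surjective _ (b k)
    have hj (j : φ.ε) :
        ∀ᶠ i in F, (∑ v, op (φ.A v j) • x v + ∑ k, op (φ.B k j) • b' k) i = 0 := by
      rw [← mk_eq_zero, map_add, map_sum, map_sum]
      simpa only [map_smul, hb'] using hb j
    filter_upwards [Filter.eventually_all.2 hj] with i hi
    exact ⟨fun k => b' k i, fun j => by simpa using hi j⟩
  · intro h
    let b (k : φ.κ) : ∀ i, N i := fun i =>
      if hi : (fun j => x j i) ∈ φ.sol (N i) then hi.choose k else 0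
    refine ⟨fun k => (eventuallyZero R F N).mkQ (b k), fun j => ?_⟩
    have := (mk_eq_zero (∑ v, op (φ.A v j) • x v + ∑ k, op (φ.B k j) • b k)).2 <| by
      filter_upwards [h] with i hi
      simpa [b, dif_pos hi] using hi.choose_spec j
    simpa only [map_add, map_sum, map_smul] using this

end ReducedProduct

section Definable

variable {R : Type u} [Ring R]

theorem IsDefinable.reducedProduct_mem {C : Set (ModuleCat.{u} Rᵐᵒᵖ)} (hC : IsDefinable R C)
    {I : Type u} (F : Filter I) (N : I → ModuleCat.{u} Rᵐᵒᵖ) (hN : ∀ i, N i ∈ C) :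
    ModuleCat.of Rᵐᵒᵖ (ReducedProduct R F fun i => N i) ∈ C := by
  obtain ⟨Φ, rfl⟩ := hC
  intro p hp
  refine Set.Subset.antisymm (fun a ha => ?_) (p.le _)
  choose x hx using fun j => Submodule.mkQ_surjective (eventuallyZero R F fun i => N i) (a j)
  obtain rfl : (fun j => (eventuallyZero R F fun i => N i).mkQ (x j)) = a := funext hx
  rw [mem_sol_reducedProduct_iff] at ha ⊢
  filter_upwards [ha] with i hi
  rwa [← hN i p hp]

theorem IsDefinable.mem_of_subsingleton {C : Set (ModuleCat.{u} Rᵐᵒᵖ)} (hC : IsDefinable R C)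
    (N : ModuleCat.{u} Rᵐᵒᵖ) [Subsingleton N] : N ∈ C := by
  obtain ⟨Φ, rfl⟩ := hC
  intro p _
  ext a
  rw [Subsingleton.elim a 0]
  exact iff_of_true (PP.zero_mem_sol _) (PP.zero_mem_sol _)

end Definable

/-- A pp condition `φ(ā)` on a tuple of `M`. Its bound variables and equations are indexed by
`Fin k` and `Fin e` so that, unlike `PP R ι`, conditions form a `Type u` and can index a
reduced product of modules in `ModuleCat.{u}`. -/
structure PPCond (R : Type u) [Ring R] (M : Type u) : Type u where
  n : ℕ
  k : ℕ
  e : ℕ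
  a : Fin n → M
  A : Matrix (Fin n) (Fin e) R
  B : Matrix (Fin k) (Fin e) R

namespace PPCond

variable {R : Type u} [Ring R] {M : Type u} {N : Type*} [AddCommGroup N] [Module Rᵐᵒᵖ N]

def formula (c : PPCond R M) : PP R (Fin c.n) := ⟨Fin c.k, Fin c.e, c.A, c.B⟩

def SatisfiedBy (c : PPCond R M) (u : M → N) : Prop := u ∘ c.a ∈ c.formula.sol N

noncomputable def ofPP {ι : Type} [Fintype ι] (φ : PP R ι) (a : ι → M) : PPCond R M where
  n := Fintype.card ι
  k := Fintype.card φ.κ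
  e := Fintype.card φ.ε
  a := a ∘ (Fintype.equivFin ι).symm
  A i j := φ.A ((Fintype.equivFin ι).symm i) ((Fintype.equivFin φ.ε).symm j)
  B k j := φ.B ((Fintype.equivFin φ.κ).symm k) ((Fintype.equivFin φ.ε).symm j)

theorem satisfiedBy_ofPP {ι : Type} [Fintype ι] (φ : PP R ι) (a : ι → M) (u : M → N) :
    (ofPP φ a).SatisfiedBy u ↔ u ∘ a ∈ φ.sol N := by
  let eι := Fintype.equivFin ι
  let eκ := Fintype.equivFin φ.κ
  let eε := Fintype.equivFin φ.ε
  have sums (j : φ.ε) (b : Fin (Fintype.card φ.κ) → N) :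
      ∑ i, op (φ.A (eι.symm i) j) • u (a (eι.symm i)) + ∑ k, op (φ.B (eκ.symm k) j) • b k
        = ∑ i, op (φ.A i j) • u (a i) + ∑ k, op (φ.B k j) • b (eκ k) := by
    congr 1
    · exact eι.symm.sum_comp fun i => op (φ.A i j) • u (a i)
    · exact (Fintype.sum_equiv eκ _ _ fun k => by simp).symm
  show (∃ b : Fin (Fintype.card φ.κ) → N, ∀ j, ∑ i, op (φ.A (eι.symm i) (eε.symm j)) •
    u (a (eι.symm i)) + ∑ k, op (φ.B (eκ.symm k) (eε.symm j)) • b k = 0) ↔ _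
  simp only [sums]
  constructor
  · rintro ⟨b, hb⟩
    exact ⟨b ∘ eκ, fun j => by simpa using hb (eε j)⟩
  · rintro ⟨b, hb⟩
    exact ⟨b ∘ eκ.symm, fun j => by simpa using hb (eε.symm j)⟩

end PPCond

theorem exists_fin_section {M : Type*} [Zero M] (A : Finset M) :
    ∃ (k : ℕ) (t : Fin k → M) (idx : M → Fin k), ∀ m ∈ A, t (idx m) = m := by
  classical
  exact ⟨A.card + 1, Fin.cons 0 fun j => A.equivFin.symm j,
    fun m => if h : m ∈ A then (A.equivFin ⟨m, h⟩).succ else 0, fun m hm => by simp [hm]⟩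

section Realization

variable {R : Type u} [Ring R]

theorem exists_realization {D : Set (ModuleCat.{u} Rᵐᵒᵖ)} {M : Type u} [AddCommGroup M]
    [Module Rᵐᵒᵖ M] (hM : ∀ p : PPPair R, (∀ N ∈ D, p.ClosedOn N) → p.ClosedOn M)
    (L : Finset (PPCond R M)) (hL : ∀ c ∈ L, c.SatisfiedBy id)
    (d : PPCond R M) (hd : ¬ d.SatisfiedBy id) :
    ∃ N ∈ D, ∃ u : M → N, (∀ c ∈ L, c.SatisfiedBy u) ∧ ¬ d.SatisfiedBy u := by
  classical
  obtain ⟨k, t, idx, ht⟩ :=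
    exists_fin_section ((insert d L).biUnion fun c => Finset.univ.image c.a)
  -- the conditions become formulas in the common variables `x_{idx m}`, read off at `t`
  let φ (c : PPCond R M) : PP R (Fin k) := c.formula.relabel (idx ∘ c.a)
  have mem_φ {N : Type u} [AddCommGroup N] [Module Rᵐᵒᵖ N] (c : PPCond R M) (x : Fin k → N) :
      x ∈ (φ c).sol N ↔ c.SatisfiedBy (x ∘ idx) :=
    PP.mem_sol_relabel _ _ _
  have sat_t (c : PPCond R M) (hc : c ∈ insert d L) :
      c.SatisfiedBy (t ∘ idx) ↔ c.SatisfiedBy id := by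
    have : t ∘ idx ∘ c.a = c.a := funext fun j => ht _ <|
      Finset.mem_biUnion.2 ⟨c, hc, Finset.mem_image_of_mem _ (Finset.mem_univ j)⟩
    rw [PPCond.SatisfiedBy, PPCond.SatisfiedBy, Function.comp_assoc, this]
    rfl
  let num := PP.conjList (L.toList.map φ)
  let p : PPPair R := ⟨k, num, num.conj (φ d), fun _ _ _ _ h => (PP.mem_sol_conj.1 h).1⟩
  have ht_num : t ∈ num.sol M := PP.mem_sol_conjList.2 <| by
    simpa only [List.forall_mem_map, Finset.mem_toList, mem_φ] using
      fun c hc => (sat_t c (Finset.mem_insert_of_mem hc)).2 (hL c hc)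
  have hp_M : ¬ p.ClosedOn M := fun h => hd <| (sat_t d (Finset.mem_insert_self d L)).1 <|
    (mem_φ d t).1 (PP.mem_sol_conj.1 (show t ∈ p.den.sol M from h ▸ ht_num)).2
  obtain ⟨N, hN, hp_N⟩ : ∃ N ∈ D, ¬ p.ClosedOn N := by
    by_contra! h
    exact hp_M (hM p h)
  obtain ⟨x, hx_num, hx_den⟩ : ∃ x ∈ num.sol N, x ∉ (num.conj (φ d)).sol N := by
    by_contra! h
    exact hp_N (Set.Subset.antisymm h (p.le N))
  refine ⟨N, hN, x ∘ idx, fun c hc => (mem_φ c x).1 ?_,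
    fun h => hx_den (PP.mem_sol_conj.2 ⟨hx_num, (mem_φ d x).2 h⟩)⟩
  exact PP.mem_sol_conjList.1 hx_num _ (List.mem_map.2 ⟨c, Finset.mem_toList.2 hc, rfl⟩)

end Realization

section Restriction

variable {R S : Type u} [Ring R] [Ring S] (f : R →+* S) {C : Set (ModuleCat.{u} Sᵐᵒᵖ)}

theorem sol_resMod {ι : Type} [Fintype ι] (φ : PP R ι) (N : ModuleCat.{u} Sᵐᵒᵖ) :
    φ.sol (resMod R S f N) = (φ.map f).sol N :=
  rfl

theorem exists_realization_of_mem_restrictSubcat (hC : IsDefinable S C)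
    {M' : ModuleCat.{u} Rᵐᵒᵖ} (hM' : M' ∈ restrictSubcat R S f C)
    (L : Finset (PPCond R M')) (d : PPCond R M') :
    ∃ N ∈ C, ∃ u : M' → resMod R S f N,
      (∀ c ∈ L, c.SatisfiedBy id → c.SatisfiedBy u) ∧ (d.SatisfiedBy u → d.SatisfiedBy id) := by
  by_cases hd : d.SatisfiedBy id
  · exact ⟨.of _ PUnit, hC.mem_of_subsingleton _, 0, fun c _ _ => PP.zero_mem_sol _,
      fun _ => hd⟩
  classical
  obtain ⟨_, ⟨N, hN, rfl⟩, u, hu, hdu⟩ := exists_realization (D := resMod R S f '' C)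
    (fun p hp => hM' p fun N hN => hp _ ⟨N, hN, rfl⟩) (L.filter (·.SatisfiedBy id))
    (fun c hc => (Finset.mem_filter.1 hc).2) d hd
  exact ⟨N, hN, u, fun c hc hcM => hu c (Finset.mem_filter.2 ⟨hc, hcM⟩), fun h => absurd h hdu⟩

theorem exists_isPureEmb_of_mem_restrictSubcat (hC : IsDefinable S C)
    {M' : ModuleCat.{u} Rᵐᵒᵖ} (hM' : M' ∈ restrictSubcat R S f C) :
    ∃ M ∈ C, ∃ g : M' →ₗ[Rᵐᵒᵖ] resMod R S f M, IsPureEmb R g := by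
  choose N hN u hu using fun i : Finset (PPCond R M') × PPCond R M' =>
    exists_realization_of_mem_restrictSubcat f hC hM' i.1 i.2
  let F : Filter (Finset (PPCond R M') × PPCond R M') := .comap Prod.fst .atTop
  let Q := ModuleCat.of Sᵐᵒᵖ (ReducedProduct S F fun i => N i)
  let g : M' → resMod R S f Q := fun m => (eventuallyZero S F fun i => N i).mkQ fun i => u i m
  have sat_g (c : PPCond R M') : c.SatisfiedBy g ↔ ∀ᶠ i in F, c.SatisfiedBy (u i) := by
    simp only [PPCond.SatisfiedBy, sol_resMod]
    exact mem_sol_reducedProduct_iff (N := fun i => N i) (c.formula.map f) fun j i => u i (c.a j)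
  have sat_g_iff (c : PPCond R M') : c.SatisfiedBy g ↔ c.SatisfiedBy id := by
    rw [sat_g]
    constructor
    · intro h
      obtain ⟨t, ht, hsub⟩ := Filter.mem_comap.1 h
      obtain ⟨L, hL⟩ := Filter.mem_atTop_sets.1 ht
      exact (hu (L, c)).2 (hsub (hL L le_rfl))
    · intro hc
      filter_upwards [(Filter.eventually_ge_atTop {c}).comap Prod.fst] with i hi
      exact (hu i).1 c (Finset.singleton_subset_iff.1 hi) hc
  obtain ⟨g', hg'⟩ := exists_isPureEmb_of_mem_sol_iff g fun ι _ φ a => by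
    simpa only [PPCond.satisfiedBy_ofPP, Function.id_comp] using sat_g_iff (.ofPP φ a)
  exact ⟨Q, hC.reducedProduct_mem F N hN, g', hg'⟩

end Restriction

/-- For a ring homomorphism `f : R → S` and a definable subcategory
`C` of `Mod-S`, the restriction `C|_R` is exactly the class of right `R`-modules
which purely embed in the restriction along `f` of some member of `C`. -/
theorem statement3 (R S : Type u) [Ring R] [Ring S] (f : R →+* S)
    (C : Set (ModuleCat.{u} Sᵐᵒᵖ)) (hC : IsDefinable S C) :
    restrictSubcat R S f C =
      { M' : ModuleCat.{u} Rᵐᵒᵖ |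
        ∃ M ∈ C, ∃ g : M' →ₗ[Rᵐᵒᵖ] (resMod R S f M), IsPureEmb R g } := by
  ext M'
  refine ⟨exists_isPureEmb_of_mem_restrictSubcat f hC, ?_⟩
  rintro ⟨M, hM, g, hg⟩ p hp
  exact PPPair.ClosedOn.of_isPureEmb (N := resMod R S f M) hg (hp M hM)

end MTM
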